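/- Let k0 be a field, (V0, ψ0) a nondegenerate symplectic k0-vector space of dimension 2r, k a field extension of k0, and W a maximal isotropic (Lagrangian) k-subspace of V0 ⊗_{k0} k, i.e., dim_k W = r and the k-bilinear extension of ψ0 vanishes identically on W × W. Then W ∩ V0 = (W̃_0)^⊥, where W̃_0 is the envelope of W and ⊥ denotes the orthogonal complement in V0 with respect to ψ0. -/

import Mathlib

open scoped TensorProduct

/-- The orthogonal complement `U^⊥ = {v ∈ V : ψ(v, u) = 0 for all u ∈ U}` of a subspace
`U` with respect to a bilinear form `ψ`. -/
def orthCompl {K V : Type*} [Field K] [AddCommGroup V] [Module K V]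
    (ψ : V →ₗ[K] V →ₗ[K] K) (U : Submodule K V) : Submodule K V where
  carrier := {v : V | ∀ u ∈ U, ψ v u = 0}
  add_mem' := by
    intro a b ha hb u hu
    simp [map_add, ha u hu, hb u hu]
  zero_mem' := by
    intro u hu
    simp
  smul_mem' := by
    intro c a ha u hu
    simp [map_smul, ha u hu]

/-- The intersection `W ∩ V`, taken via the canonical injection `v ↦ 1 ⊗ v` of `V` into
`V ⊗_{k₀} k`. -/
noncomputable def interBase (k₀ k V : Type*) [Field k₀] [Field k] [Algebra k₀ k]
    [AddCommGroup V] [Module k₀ V] (W : Submodule k (k ⊗[k₀] V)) :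
    Submodule k₀ V :=
  Submodule.comap (TensorProduct.mk k₀ k V 1) (W.restrictScalars k₀)

/-- The `k₀`-hull of a `k`-subspace `W ⊆ V ⊗_{k₀} k`: the smallest `k`-subspace of
`V ⊗_{k₀} k` containing `W` that is defined over `k₀`. -/
def kHull (k₀ k V : Type*) [Field k₀] [Field k] [Algebra k₀ k]
    [AddCommGroup V] [Module k₀ V] (W : Submodule k (k ⊗[k₀] V)) :
    Submodule k (k ⊗[k₀] V) :=
  sInf {W' : Submodule k (k ⊗[k₀] V) | W ≤ W' ∧ ∃ U : Submodule k₀ V, W' = U.baseChange k}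

/-- The envelope of `W`: the intersection of the `k₀`-hull of `W` with `V`. -/
noncomputable def envelope (k₀ k V : Type*) [Field k₀] [Field k] [Algebra k₀ k]
    [AddCommGroup V] [Module k₀ V] (W : Submodule k (k ⊗[k₀] V)) :
    Submodule k₀ V :=
  Submodule.comap (TensorProduct.mk k₀ k V 1) ((kHull k₀ k V W).restrictScalars k₀)

/-!
A `k₀`-linear functional `f : k → k₀` gives a contraction `c ⊗ v ↦ f c • v` from `k ⊗ V` to
`V`, and `x` lies in `k ⊗ U` exactly when all its contractions lie in `U` (expand `x` along a
`k₀`-basis of `k`). Hence the `k₀`-hull of `W` is defined over `k₀`, the envelope is spanned by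
the contractions of elements of `W`, and `W ⊆ k ⊗ U ↔ envelope ⊆ U`. Since `W` is Lagrangian,
`W = W^⊥`, so `v ∈ W` iff `W ⊆ k ⊗ v^⊥` iff the envelope lies in `v^⊥`.
-/

namespace TensorProduct

variable {K A V : Type*} [Field K] [Ring A] [Algebra K A] [AddCommGroup V] [Module K V]

noncomputable def contract (f : A →ₗ[K] K) : A ⊗[K] V →ₗ[K] V :=
  lift ((LinearMap.lsmul K V).comp f)

@[simp] lemma contract_tmul (f : A →ₗ[K] K) (a : A) (v : V) :
    contract f (a ⊗ₜ v) = f a • v := rfl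

lemma contract_smul (f : A →ₗ[K] K) (a : A) (x : A ⊗[K] V) :
    contract f (a • x) = contract (f ∘ₗ LinearMap.mulLeft K a) x := by
  induction x using TensorProduct.induction_on with
  | zero => simp
  | tmul b v => simp [smul_tmul']
  | add x y hx hy => rw [smul_add, map_add, map_add, hx, hy]

end TensorProduct

open TensorProduct

namespace Submodule

variable {K A V : Type*} [Field K] [Ring A] [Algebra K A] [AddCommGroup V] [Module K V]

lemma mem_baseChange_iff_forall_contract_mem (U : Submodule K V) (x : A ⊗[K] V) :
    x ∈ U.baseChange A ↔ ∀ f : A →ₗ[K] K, contract f x ∈ U := by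
  classical
  constructor
  · intro hx
    rw [baseChange_eq_span] at hx
    induction hx using span_induction with
    | mem y hy =>
      obtain ⟨u, hu, rfl⟩ := hy
      exact fun f => U.smul_mem _ hu
    | zero => simp
    | add a b _ _ ha hb => exact fun f => by rw [map_add]; exact U.add_mem (ha f) (hb f)
    | smul a y _ hy => exact fun f => by rw [contract_smul]; exact hy _
  · intro h
    let b := Module.Basis.ofVectorSpace K A
    obtain ⟨c, rfl⟩ := eq_repr_basis_left b x
    have hcoord (i) : contract (b.coord i) (c.sum fun j v => (b j : A) ⊗ₜ v) = c i := by
      rw [map_finsuppSum, Finsupp.sum_eq_single i]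
      · simp
      · intro j _ hji
        simp [hji]
      · simp
    refine Submodule.finsuppSum_mem _ _ _ _ fun i _ => tmul_mem_baseChange_of_mem _ ?_
    simpa only [hcoord] using h (b.coord i)

lemma comap_mk_one_baseChange [Nontrivial A] (U : Submodule K V) :
    comap (TensorProduct.mk K A V 1) ((U.baseChange A).restrictScalars K) = U := by
  ext v
  obtain ⟨f, hf⟩ : ∃ f : A →ₗ[K] K, f 1 ≠ 0 := by
    by_contra! h
    exact one_ne_zero ((Module.forall_dual_apply_eq_zero_iff K (1 : A)).mp h)
  simp only [mem_comap, restrictScalars_mem, TensorProduct.mk_apply,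
    mem_baseChange_iff_forall_contract_mem, contract_tmul]
  exact ⟨fun h => (U.smul_mem_iff hf).mp (h f), fun h g => U.smul_mem _ h⟩

end Submodule

section Hull

variable {k₀ k V : Type*} [Field k₀] [Field k] [Algebra k₀ k] [AddCommGroup V] [Module k₀ V]

noncomputable def contractSpan (W : Submodule k (k ⊗[k₀] V)) : Submodule k₀ V :=
  Submodule.span k₀ {v | ∃ f : k →ₗ[k₀] k₀, ∃ x ∈ W, contract f x = v}

lemma le_baseChange_iff_contractSpan_le (W : Submodule k (k ⊗[k₀] V)) (U : Submodule k₀ V) :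
    W ≤ U.baseChange k ↔ contractSpan W ≤ U := by
  rw [contractSpan, Submodule.span_le]
  simp only [SetLike.le_def, Submodule.mem_baseChange_iff_forall_contract_mem]
  exact ⟨fun h v ⟨f, x, hx, hv⟩ => hv ▸ h hx f, fun h x hx f => h ⟨f, x, hx, rfl⟩⟩

lemma kHull_eq_baseChange_contractSpan (W : Submodule k (k ⊗[k₀] V)) :
    kHull k₀ k V W = (contractSpan W).baseChange k := by
  refine le_antisymm (sInf_le ⟨(le_baseChange_iff_contractSpan_le W _).mpr le_rfl, _, rfl⟩) ?_
  refine le_sInf ?_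
  rintro _ ⟨hW, U, rfl⟩
  exact Submodule.baseChange_mono k ((le_baseChange_iff_contractSpan_le W U).mp hW)

lemma envelope_eq_contractSpan (W : Submodule k (k ⊗[k₀] V)) :
    envelope k₀ k V W = contractSpan W := by
  rw [envelope, kHull_eq_baseChange_contractSpan, Submodule.comap_mk_one_baseChange]

lemma le_baseChange_iff_envelope_le (W : Submodule k (k ⊗[k₀] V)) (U : Submodule k₀ V) :
    W ≤ U.baseChange k ↔ envelope k₀ k V W ≤ U := by
  rw [envelope_eq_contractSpan, le_baseChange_iff_contractSpan_le]

end Hull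

namespace LinearMap.BilinForm

variable {K A V : Type*} [Field K] [CommRing A] [Algebra K A] [AddCommGroup V] [Module K V]

lemma apply_contract (ψ : LinearMap.BilinForm K V) (f : A →ₗ[K] K) (x : A ⊗[K] V) (v : V) :
    ψ (contract f x) v = f (ψ.baseChange A x (1 ⊗ₜ v)) := by
  induction x using TensorProduct.induction_on with
  | zero => simp
  | tmul a u => simp [baseChange_tmul, smul_eq_mul, mul_comm]
  | add x y hx hy => simp only [map_add, LinearMap.add_apply, hx, hy]

lemma mem_baseChange_ker_flip_iff (ψ : LinearMap.BilinForm K V) (v : V) (x : A ⊗[K] V) :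
    x ∈ (LinearMap.ker (ψ.flip v)).baseChange A ↔ ψ.baseChange A x (1 ⊗ₜ v) = 0 := by
  simp only [Submodule.mem_baseChange_iff_forall_contract_mem, LinearMap.mem_ker, flip_apply,
    apply_contract]
  exact Module.forall_dual_apply_eq_zero_iff K _

lemma Nondegenerate.baseChange [IsDomain A] [FiniteDimensional K V] {ψ : LinearMap.BilinForm K V}
    (hψ : ψ.Nondegenerate) : (ψ.baseChange A).Nondegenerate := by
  refine .ofSeparatingLeft fun x hx => ?_
  have hcontract (f : A →ₗ[K] K) : contract f x = 0 :=
    hψ.1 _ fun v => by rw [apply_contract, hx, map_zero]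
  simpa using (Submodule.mem_baseChange_iff_forall_contract_mem ⊥ x).mpr hcontract

lemma orthogonal_eq_self_of_isotropic [FiniteDimensional K V] {B : LinearMap.BilinForm K V}
    (hB : B.Nondegenerate) {W : Submodule K V} (hiso : ∀ x ∈ W, ∀ y ∈ W, B x y = 0)
    (hdim : Module.finrank K V = 2 * Module.finrank K W) : B.orthogonal W = W := by
  refine (Submodule.eq_of_le_of_finrank_le (show W ≤ B.orthogonal W from
    fun w hw x hx => hiso x hx w hw) ?_).symm
  rw [B.finrank_orthogonal hB, hdim]
  omega

end LinearMap.BilinForm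

/-- Let `(V, ψ)` be a nondegenerate symplectic `k₀`-vector space of dimension `2r`, `k` a
field extension of `k₀`, and `W` a maximal isotropic (Lagrangian) `k`-subspace of
`V ⊗_{k₀} k`.  Then `W ∩ V` equals the orthogonal complement of the envelope of `W`. -/
theorem interBase_eq_orthCompl_envelope
    (k₀ k V : Type*) [Field k₀] [Field k] [Algebra k₀ k]
    [AddCommGroup V] [Module k₀ V] [FiniteDimensional k₀ V]
    (r : ℕ) (hdim : Module.finrank k₀ V = 2 * r)
    (ψ : LinearMap.BilinForm k₀ V)
    (halt : ∀ x : V, ψ x x = 0) (hnd : ψ.Nondegenerate)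
    (W : Submodule k (k ⊗[k₀] V))
    (hrank : Module.finrank k W = r)
    (hiso : ∀ x ∈ W, ∀ y ∈ W, (ψ.baseChange k) x y = 0) :
    interBase k₀ k V W = orthCompl ψ (envelope k₀ k V W) := by
  have hLagrangian : (ψ.baseChange k).orthogonal W = W :=
    LinearMap.BilinForm.orthogonal_eq_self_of_isotropic hnd.baseChange hiso
      (by rw [Module.finrank_baseChange, hdim, hrank])
  ext v
  calc v ∈ interBase k₀ k V W ↔ 1 ⊗ₜ v ∈ (ψ.baseChange k).orthogonal W := by
        rw [hLagrangian]; rfl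
    _ ↔ W ≤ (LinearMap.ker (ψ.flip v)).baseChange k := by
        simp only [SetLike.le_def, LinearMap.BilinForm.mem_baseChange_ker_flip_iff]; rfl
    _ ↔ envelope k₀ k V W ≤ LinearMap.ker (ψ.flip v) := le_baseChange_iff_envelope_le W _
    _ ↔ v ∈ orthCompl ψ (envelope k₀ k V W) :=
        forall₂_congr fun u _ => (LinearMap.IsAlt.isRefl halt).eq_iff
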